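/- arXiv:cs/0702053 — 2 statements merged into one kernel-verified Lean document; each statement's English description precedes it below -/
import Mathlib

section
/- If D and D' are minimized DFAs with S(D) = S(D'), then D and D' have isomorphic infinite parts. -/
open Set

/-- Symmetric difference of two languages, as a set of words. -/
def symmDiffL {α : Type} (L L' : Language α) : Set (List α) :=
  {w | (w ∈ L ∧ w ∉ L') ∨ (w ∈ L' ∧ w ∉ L)}

/-- Two languages are finitely different if their symmetric difference is finite. -/
def FinDiff {α : Type} (L L' : Language α) : Prop := (symmDiffL L L').Finite

/-- The set of words that drive the DFA from its start state to state `q`. -/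
def DFA.reachedBy {α σ : Type} (D : DFA α σ) (q : σ) : Set (List α) :=
  {w | D.eval w = q}

/-- The infinite part of a DFA: states reached by infinitely many words. -/
def DFA.infinitePart {α σ : Type} (D : DFA α σ) : Set σ :=
  {q | (D.reachedBy q).Infinite}

/-- The finite part of a DFA: states reached by only finitely many words. -/
def DFA.finitePart {α σ : Type} (D : DFA α σ) : Set σ :=
  {q | (D.reachedBy q).Finite}

/-- The language induced by state `q` of DFA `D`. -/
def DFA.langOf {α σ : Type} (D : DFA α σ) (q : σ) : Language α :=
  {w | D.evalFrom q w ∈ D.accept}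

/-- A DFA is minimized if all states are reachable and distinct states
induce distinct languages. -/
def DFA.Minimized {α σ : Type} (D : DFA α σ) : Prop :=
  (∀ q, ∃ w, D.eval w = q) ∧ ∀ p q : σ, D.langOf p = D.langOf q → p = q

/-- Two DFAs have isomorphic infinite parts. -/
def InfIso {α σ σ' : Type} (D : DFA α σ) (D' : DFA α σ') : Prop :=
  ∃ f : σ → σ', Set.BijOn f D.infinitePart D'.infinitePart ∧
    (∀ q ∈ D.infinitePart, q ∈ D.accept ↔ f q ∈ D'.accept) ∧
    (∀ q ∈ D.infinitePart, ∀ c : α, f (D.step q c) = D'.step (f q) c)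

/-- `S(D)`: the set of finite-difference classes of languages induced by states of `D`,
each class represented as the set of languages finitely different from the inducing one. -/
def SClasses {α σ : Type} (D : DFA α σ) : Set (Set (Language α)) :=
  {C | ∃ q : σ, C = {L | FinDiff (D.langOf q) L}}

/-- A DFA is f-minimal if no DFA recognizing a finitely different language has
fewer states. -/
def FMinimal {α σ : Type} [Fintype σ] (D : DFA α σ) : Prop :=
  ∀ (σ' : Type) (_ : Fintype σ') (D' : DFA α σ'),
    FinDiff D.accepts D'.accepts → Fintype.card σ ≤ Fintype.card σ'

/-!
Since `S(D) = S(D')`, some state `p'` of `D'` has a language finitely different from `L(D)`. The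
words `u` for which the left quotients `u⁻¹ L(D)` and `u⁻¹ L(p')` differ are prefixes of the
finitely many words in the symmetric difference. So for a state `q` of the infinite part of `D`,
all but finitely many of the infinitely many words `u` reaching `q` drive `D'` from `p'` to a
state with language `u⁻¹ L(p') = u⁻¹ L(D) = L(q)`; as `D'` is minimized this is one state `q'`,
reached by infinitely many words. Matching states by languages in both directions gives mutually
inverse maps between the infinite parts, and they respect transitions and acceptance because the
language of a state determines those of its successors and whether it accepts.
-/

section

variable {α σ σ' : Type}

theorem symmDiffL_comm (L L' : Language α) : symmDiffL L L' = symmDiffL L' L := by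
  ext w
  simp only [symmDiffL, mem_ofPred_eq]
  tauto

theorem FinDiff.symm {L L' : Language α} (h : FinDiff L L') : FinDiff L' L := by
  rwa [FinDiff, symmDiffL_comm]

theorem finDiff_refl (L : Language α) : FinDiff L L := by
  simp [FinDiff, symmDiffL]

theorem FinDiff.finite_setOf_leftQuotient_ne {L L' : Language α} (h : FinDiff L L') :
    {u | L.leftQuotient u ≠ L'.leftQuotient u}.Finite := by
  refine (h.biUnion fun w _ => w.inits.finite_toSet).subset fun u hu => ?_
  obtain ⟨x, hx⟩ : ∃ x, ¬(u ++ x ∈ L ↔ u ++ x ∈ L') :=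
    not_forall.mp fun hall => hu (Set.ext hall)
  refine mem_biUnion (x := u ++ x) ?_ ?_
  · simp only [symmDiffL, mem_ofPred_eq]
    tauto
  · simp

namespace DFA

theorem langOf_evalFrom (D : DFA α σ) (q : σ) (u : List α) :
    D.langOf (D.evalFrom q u) = (D.langOf q).leftQuotient u := by
  ext x
  change D.evalFrom _ x ∈ D.accept ↔ D.evalFrom q (u ++ x) ∈ D.accept
  rw [evalFrom_of_append]

theorem langOf_step (D : DFA α σ) (q : σ) (c : α) :
    D.langOf (D.step q c) = (D.langOf q).leftQuotient [c] := by
  rw [← evalFrom_singleton, langOf_evalFrom]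

theorem mem_accept_iff_nil_mem_langOf (D : DFA α σ) (q : σ) :
    q ∈ D.accept ↔ [] ∈ D.langOf q :=
  Iff.rfl

theorem step_mem_infinitePart (D : DFA α σ) {q : σ} (hq : q ∈ D.infinitePart) (c : α) :
    D.step q c ∈ D.infinitePart := by
  refine (hq.image (List.append_left_injective [c]).injOn).mono ?_
  rintro _ ⟨u, hu, rfl⟩
  simp only [reachedBy, mem_ofPred_eq] at hu ⊢
  rw [eval_append_singleton, hu]

theorem mem_infinitePart_of_evalFrom_eq (D : DFA α σ) {p q : σ} {w : List α}
    (hw : D.eval w = p) {S : Set (List α)} (hS : S.Infinite) (hSq : ∀ u ∈ S, D.evalFrom p u = q) :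
    q ∈ D.infinitePart := by
  refine (hS.image (List.append_right_injective w).injOn).mono ?_
  rintro _ ⟨u, hu, rfl⟩
  simp only [reachedBy, mem_ofPred_eq, eval, evalFrom_of_append]
  rw [← eval, hw, hSq u hu]

end DFA

theorem exists_finDiff_of_sClasses_subset {D : DFA α σ} {D' : DFA α σ'}
    (h : SClasses D ⊆ SClasses D') (q : σ) : ∃ q', FinDiff (D.langOf q) (D'.langOf q') := by
  obtain ⟨q', hq'⟩ := h ⟨q, rfl⟩
  have hself : D.langOf q ∈ {L | FinDiff (D.langOf q) L} := finDiff_refl _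
  rw [hq'] at hself
  exact ⟨q', FinDiff.symm hself⟩

theorem exists_mem_infinitePart_langOf_eq {A : DFA α σ} {B : DFA α σ'}
    (hB : Function.Injective B.langOf) {p' : σ'} {w : List α} (hw : B.eval w = p')
    (hfd : FinDiff (A.langOf A.start) (B.langOf p')) {q : σ} (hq : q ∈ A.infinitePart) :
    ∃ q' ∈ B.infinitePart, B.langOf q' = A.langOf q := by
  set S := A.reachedBy q \ {u | (A.langOf A.start).leftQuotient u ≠ (B.langOf p').leftQuotient u}
  have hS : S.Infinite := hq.sdiff hfd.finite_setOf_leftQuotient_ne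
  have hlang : ∀ u ∈ S, B.langOf (B.evalFrom p' u) = A.langOf q := by
    rintro u ⟨hu, hne⟩
    rw [B.langOf_evalFrom, ← not_not.mp hne, ← A.langOf_evalFrom]
    exact congrArg A.langOf hu
  obtain ⟨u₀, hu₀⟩ := hS.nonempty
  refine ⟨B.evalFrom p' u₀, B.mem_infinitePart_of_evalFrom_eq hw hS fun u hu => ?_, hlang u₀ hu₀⟩
  exact hB ((hlang u hu).trans (hlang u₀ hu₀).symm)

theorem infIso_of_langOf_eq {D : DFA α σ} {D' : DFA α σ'}
    (hD : Function.Injective D.langOf) (hD' : Function.Injective D'.langOf)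
    {f : σ → σ'} {g : σ' → σ}
    (hf : ∀ q ∈ D.infinitePart, f q ∈ D'.infinitePart ∧ D'.langOf (f q) = D.langOf q)
    (hg : ∀ q ∈ D'.infinitePart, g q ∈ D.infinitePart ∧ D.langOf (g q) = D'.langOf q) :
    InfIso D D' := by
  have hinv : InvOn g f D.infinitePart D'.infinitePart :=
    ⟨fun q hq => hD (by rw [(hg _ (hf q hq).1).2, (hf q hq).2]),
      fun q hq => hD' (by rw [(hf _ (hg q hq).1).2, (hg q hq).2])⟩
  refine ⟨f, hinv.bijOn (fun q hq => (hf q hq).1) (fun q hq => (hg q hq).1), ?_, ?_⟩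
  · intro q hq
    rw [D.mem_accept_iff_nil_mem_langOf, D'.mem_accept_iff_nil_mem_langOf, (hf q hq).2]
  · intro q hq c
    apply hD'
    rw [(hf _ (D.step_mem_infinitePart hq c)).2, D.langOf_step, D'.langOf_step, (hf q hq).2]

end

theorem infIso_of_sClasses_eq_general {α σ σ' : Type}
    (D : DFA α σ) (D' : DFA α σ')
    (hD : D.Minimized) (hD' : D'.Minimized)
    (h : SClasses D = SClasses D') :
    InfIso D D' := by
  obtain ⟨p', hp'⟩ := exists_finDiff_of_sClasses_subset h.subset D.start
  obtain ⟨p, hp⟩ := exists_finDiff_of_sClasses_subset h.symm.subset D'.start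
  obtain ⟨w', hw'⟩ := hD'.1 p'
  obtain ⟨w, hw⟩ := hD.1 p
  have : Nonempty σ := ⟨D.start⟩
  have : Nonempty σ' := ⟨D'.start⟩
  choose! f hf using fun q (hq : q ∈ D.infinitePart) =>
    exists_mem_infinitePart_langOf_eq hD'.2 hw' hp' hq
  choose! g hg using fun q (hq : q ∈ D'.infinitePart) =>
    exists_mem_infinitePart_langOf_eq hD.2 hw hp hq
  exact infIso_of_langOf_eq hD.2 hD'.2 hf hg

/-- Minimized DFAs with equal `S(D)` have isomorphic infinite parts. -/
theorem infIso_of_sClasses_eq {α σ σ' : Type} [Fintype σ] [Fintype σ']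
    (D : DFA α σ) (D' : DFA α σ')
    (hD : D.Minimized) (hD' : D'.Minimized)
    (h : SClasses D = SClasses D') :
    InfIso D D' :=
  infIso_of_sClasses_eq_general D D' hD hD' h
end

section
/- In an f-minimal DFA, each state in the finite part is the sole representative of its finite-difference state-class: if D is f-minimal with p ∈ F(D), q a state of D, and L(p) △ L(q) finite, then p = q. -/
open Set

/-! ### Auxiliary material -/

lemma finDiff_symm {α : Type} {L L' : Language α} (h : FinDiff L L') : FinDiff L' L := by
  have : symmDiffL L' L = symmDiffL L L' := by
    ext w; constructor <;> (intro hw; cases hw with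
      | inl h => exact Or.inr h
      | inr h => exact Or.inl h)
  unfold FinDiff
  rw [this]; exact h

open Classical in
/-- Merge state `p` into state `t`: delete `p` and redirect all transitions into `p`
(and the start, if it is `p`) to `t`. -/
noncomputable def mergeDFA {α σ : Type} (D : DFA α σ) (p : σ) (t : {x : σ // x ≠ p}) :
    DFA α {x : σ // x ≠ p} where
  step s c := if h : D.step s.1 c = p then t else ⟨D.step s.1 c, h⟩
  start := if h : D.start = p then t else ⟨D.start, h⟩
  accept := {s | s.1 ∈ D.accept}

lemma mergeDFA_evalFrom {α σ : Type} (D : DFA α σ) (p : σ) (t : {x : σ // x ≠ p})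
    (w : List α) : ∀ (s : σ) (hs : s ≠ p),
    (∀ n, n ≤ w.length → D.evalFrom s (w.take n) ≠ p) →
    ((mergeDFA D p t).evalFrom ⟨s, hs⟩ w).1 = D.evalFrom s w := by
  induction w with
  | nil => intro s hs _; simp
  | cons a w ih =>
    intro s hs h
    have h1 : D.step s a ≠ p := by
      have := h 1 (by simp)
      simpa [DFA.evalFrom] using this
    have hstep : (mergeDFA D p t).step ⟨s, hs⟩ a = ⟨D.step s a, h1⟩ := by
      simp [mergeDFA, h1]
    have hcons : (mergeDFA D p t).evalFrom ⟨s, hs⟩ (a :: w)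
        = (mergeDFA D p t).evalFrom ⟨D.step s a, h1⟩ w := by
      simp [DFA.evalFrom, hstep]
    have hcons' : D.evalFrom s (a :: w) = D.evalFrom (D.step s a) w := by
      simp [DFA.evalFrom]
    rw [hcons, hcons']
    exact ih (D.step s a) h1 (fun n hn => by
      have := h (n + 1) (by simpa using Nat.succ_le_succ hn)
      simpa [DFA.evalFrom] using this)

lemma mergeDFA_eval_of_no_hit {α σ : Type} (D : DFA α σ) (p : σ) (t : {x : σ // x ≠ p})
    (w : List α) (h : ∀ n, n ≤ w.length → D.eval (w.take n) ≠ p) :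
    ((mergeDFA D p t).eval w).1 = D.eval w := by
  have hs : D.start ≠ p := by
    have := h 0 (by simp)
    simpa using this
  have hstart : (mergeDFA D p t).start = ⟨D.start, hs⟩ := by
    simp [mergeDFA, hs]
  show ((mergeDFA D p t).evalFrom (mergeDFA D p t).start w).1 = D.evalFrom D.start w
  rw [hstart]
  exact mergeDFA_evalFrom D p t w D.start hs h

lemma mergeDFA_eval_first {α σ : Type} (D : DFA α σ) (p : σ) (t : {x : σ // x ≠ p})
    (u : List α) (hu : D.eval u = p)
    (hmin : ∀ m, m < u.length → D.eval (u.take m) ≠ p) :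
    (mergeDFA D p t).eval u = t := by
  rcases List.eq_nil_or_concat u with rfl | ⟨u', c, rfl⟩
  · have hstart : D.start = p := hu
    show (mergeDFA D p t).start = t
    simp [mergeDFA, hstart]
  · simp only [List.concat_eq_append] at hu hmin ⊢
    have hlen : u'.length < (u' ++ [c]).length := by simp
    have hpre : ∀ n, n ≤ u'.length → D.eval (u'.take n) ≠ p := by
      intro n hn
      have := hmin n (lt_of_le_of_lt hn hlen)
      rwa [List.take_append_of_le_length hn] at this
    have hs : D.start ≠ p := by
      have := hpre 0 (by simp)
      simpa using this
    have hu' : ((mergeDFA D p t).eval u').1 = D.eval u' :=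
      mergeDFA_eval_of_no_hit D p t u' hpre
    have hstep : D.step (D.eval u') c = p := by
      rw [← DFA.eval_append_singleton] at *
      exact hu
    show (mergeDFA D p t).eval (u' ++ [c]) = t
    rw [DFA.eval_append_singleton]
    rcases hx : (mergeDFA D p t).eval u' with ⟨x, hxp⟩
    have hxval : x = D.eval u' := by rw [← hu', hx]
    show (mergeDFA D p t).step ⟨x, hxp⟩ c = t
    simp [mergeDFA, hxval, hstep]

lemma mergeDFA_finDiff {α σ : Type} (D : DFA α σ) (p q : σ) (hqp : q ≠ p)
    (hP : (D.reachedBy p).Finite)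
    (hno : (∃ u, D.eval u = p) → ∀ v, D.evalFrom q v ≠ p)
    (hS : FinDiff (D.langOf p) (D.langOf q)) :
    FinDiff D.accepts (mergeDFA D p ⟨q, hqp⟩).accepts := by
  classical
  apply Set.Finite.subset
    (Set.Finite.image (fun z : List α × List α => z.1 ++ z.2) (hP.prod hS))
  intro w hw
  by_cases hc : ∃ n, n ≤ w.length ∧ D.eval (w.take n) = p
  · -- some prefix of w reaches p; take the first one
    let n := Nat.find hc
    obtain ⟨hn_le, hn_eval⟩ : n ≤ w.length ∧ D.eval (w.take n) = p := Nat.find_spec hc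
    have hmin : ∀ m, m < n → D.eval (w.take m) ≠ p := by
      intro m hm hev
      exact Nat.find_min hc hm ⟨le_trans (le_of_lt hm) hn_le, hev⟩
    set u := w.take n with hu_def
    set v := w.drop n with hv_def
    have hw_split : u ++ v = w := List.take_append_drop n w
    have hulen : u.length = n := by
      rw [hu_def, List.length_take]; exact min_eq_left hn_le
    have humin : ∀ m, m < u.length → D.eval (u.take m) ≠ p := by
      intro m hm
      rw [hulen] at hm
      rw [hu_def, List.take_take, min_eq_left (le_of_lt hm)]
      exact hmin m hm
    have hfirst : (mergeDFA D p ⟨q, hqp⟩).eval u = ⟨q, hqp⟩ :=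
      mergeDFA_eval_first D p ⟨q, hqp⟩ u hn_eval humin
    have hno' : ∀ m, m ≤ v.length → D.evalFrom q (v.take m) ≠ p :=
      fun m _ => hno ⟨u, hn_eval⟩ (v.take m)
    -- evaluate the merged DFA on w
    have hmerge_eval : ((mergeDFA D p ⟨q, hqp⟩).eval w).1 = D.evalFrom q v := by
      rw [← hw_split]
      show ((mergeDFA D p ⟨q, hqp⟩).evalFrom (mergeDFA D p ⟨q, hqp⟩).start (u ++ v)).1
        = D.evalFrom q v
      rw [DFA.evalFrom_of_append]
      have : (mergeDFA D p ⟨q, hqp⟩).evalFrom (mergeDFA D p ⟨q, hqp⟩).start u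
          = ⟨q, hqp⟩ := hfirst
      rw [this]
      exact mergeDFA_evalFrom D p ⟨q, hqp⟩ v q hqp hno'
    have hD_eval : D.eval w = D.evalFrom p v := by
      rw [← hw_split]
      show D.evalFrom D.start (u ++ v) = D.evalFrom p v
      rw [DFA.evalFrom_of_append]
      exact congrArg (fun s => D.evalFrom s v) hn_eval
    -- membership translations
    have hDacc : w ∈ D.accepts ↔ v ∈ D.langOf p := by
      rw [DFA.mem_accepts, hD_eval]; rfl
    have hMacc : w ∈ (mergeDFA D p ⟨q, hqp⟩).accepts ↔ v ∈ D.langOf q := by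
      rw [DFA.mem_accepts]
      show ((mergeDFA D p ⟨q, hqp⟩).eval w) ∈ {s : {x : σ // x ≠ p} | s.1 ∈ D.accept}
        ↔ v ∈ D.langOf q
      rw [Set.mem_setOf_eq, hmerge_eval]
      rfl
    refine ⟨(u, v), ⟨hn_eval, ?_⟩, hw_split⟩
    cases hw with
    | inl h => exact Or.inl ⟨hDacc.mp h.1, fun hv => h.2 (hMacc.mpr hv)⟩
    | inr h => exact Or.inr ⟨hMacc.mp h.1, fun hv => h.2 (hDacc.mpr hv)⟩
  · -- no prefix of w reaches p: the two DFAs agree on w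
    exfalso
    push_neg at hc
    have heq : ((mergeDFA D p ⟨q, hqp⟩).eval w).1 = D.eval w :=
      mergeDFA_eval_of_no_hit D p ⟨q, hqp⟩ w hc
    have : w ∈ D.accepts ↔ w ∈ (mergeDFA D p ⟨q, hqp⟩).accepts := by
      have hiff : ((mergeDFA D p ⟨q, hqp⟩).eval w) ∈ (mergeDFA D p ⟨q, hqp⟩).accept
          ↔ ((mergeDFA D p ⟨q, hqp⟩).eval w).1 ∈ D.accept := Iff.rfl
      rw [DFA.mem_accepts, DFA.mem_accepts, hiff, heq]
    cases hw with
    | inl h => exact h.2 (this.mp h.1)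
    | inr h => exact h.2 (this.mpr h.1)

/-- If some word loops from `r` back to `r` nontrivially and `r` is reachable,
then `r` is reached by infinitely many words. -/
lemma reachedBy_infinite_of_loop {α σ : Type} (D : DFA α σ) (r : σ)
    (u c : List α) (hu : D.eval u = r) (hc : D.evalFrom r c = r) (hcne : c ≠ []) :
    (D.reachedBy r).Infinite := by
  have hpow : ∀ k, D.evalFrom r ((List.replicate k c).flatten) = r := by
    intro k
    induction k with
    | zero => simp
    | succ k ih =>
      rw [List.replicate_succ, List.flatten_cons, DFA.evalFrom_of_append, hc, ih]
  apply Set.infinite_of_injective_forall_mem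
    (f := fun k : ℕ => u ++ (List.replicate k c).flatten)
  case hi =>
    intro k₁ k₂ hk
    have hlen : u.length + k₁ * c.length = u.length + k₂ * c.length := by
      have := congrArg List.length hk
      simpa [List.length_flatten, List.map_replicate, List.sum_replicate,
        smul_eq_mul] using this
    have hcpos : 0 < c.length := List.length_pos_iff.mpr hcne
    have : k₁ * c.length = k₂ * c.length := by omega
    exact Nat.eq_of_mul_eq_mul_right hcpos this
  case hf =>
    intro k
    show D.eval (u ++ (List.replicate k c).flatten) = r
    show D.evalFrom D.start (u ++ (List.replicate k c).flatten) = r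
    rw [DFA.evalFrom_of_append]
    have : D.evalFrom D.start u = r := hu
    rw [this]
    exact hpow k

/-- In an f-minimal DFA, each finite-part state is the sole
representative of its state-class. -/
theorem fminimal_finitePart_unique {α σ : Type} [Fintype σ] (D : DFA α σ)
    (hmin : FMinimal D) (p q : σ) (hp : p ∈ D.finitePart)
    (h : FinDiff (D.langOf p) (D.langOf q)) :
    p = q := by
  classical
  by_contra hne
  have hP : (D.reachedBy p).Finite := hp
  -- a helper to derive the final contradiction from a merged DFA
  have contra : ∀ (r : σ) (D' : DFA α {x : σ // x ≠ r}),
      FinDiff D.accepts D'.accepts → False := by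
    intro r D' hfd
    have hle := hmin {x : σ // x ≠ r} inferInstance D' hfd
    have hlt : Fintype.card {x : σ // x ≠ r} < Fintype.card σ :=
      Fintype.card_subtype_lt (x := r) (by simp)
    omega
  by_cases hcyc : ∃ v, D.evalFrom q v = p
  · -- p is reachable from q: merge q into p instead
    obtain ⟨v, hv⟩ := hcyc
    have hvne : v ≠ [] := by
      intro hnil
      rw [hnil] at hv
      exact hne (by simpa using hv.symm)
    -- q is reached by finitely many words
    have hQ : (D.reachedBy q).Finite := by
      have himg : (fun w : List α => w ++ v) '' D.reachedBy q ⊆ D.reachedBy p := by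
        rintro _ ⟨w, hw, rfl⟩
        show D.eval (w ++ v) = p
        show D.evalFrom D.start (w ++ v) = p
        rw [DFA.evalFrom_of_append]
        have : D.evalFrom D.start w = q := hw
        rw [this, hv]
      apply Set.Finite.of_finite_image (f := fun w : List α => w ++ v)
        (Set.Finite.subset hP himg)
      intro a _ b _ hab
      exact List.append_cancel_right hab
    -- q is not reachable from p (else p would lie on a cycle and be reached
    -- by infinitely many words)
    have hno : (∃ u, D.eval u = q) → ∀ v', D.evalFrom p v' ≠ q := by
      rintro ⟨u, hu⟩ v' hv'
      have hcycle : D.evalFrom p (v' ++ v) = p := by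
        rw [DFA.evalFrom_of_append, hv', hv]
      have hreach : D.eval (u ++ v) = p := by
        show D.evalFrom D.start (u ++ v) = p
        rw [DFA.evalFrom_of_append]
        have : D.evalFrom D.start u = q := hu
        rw [this, hv]
      have hcne : v' ++ v ≠ [] := by
        intro hnil
        exact hvne (List.append_eq_nil_iff.mp hnil).2
      exact reachedBy_infinite_of_loop D p (u ++ v) (v' ++ v) hreach hcycle hcne hP
    exact contra q (mergeDFA D q ⟨p, hne⟩)
      (mergeDFA_finDiff D q p hne hQ hno (finDiff_symm h))
  · -- p is not reachable from q: merge p into q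
    push_neg at hcyc
    exact contra p (mergeDFA D p ⟨q, Ne.symm hne⟩)
      (mergeDFA_finDiff D p q (Ne.symm hne) hP (fun _ => hcyc) h)
end
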